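/- arXiv:2204.01566 — 3 statements merged into one kernel-verified Lean document; each statement's English description precedes it below -/
import Mathlib

section
/- Let G = SU(2) with standard diagonal maximal torus T, acting on the space U_n of complex homogeneous polynomials of degree n ≥ 1 in x, y. Let W be the complex line spanned by the monomial x^i y^{n−i} (0 ≤ i ≤ n). Then the stabilizer {g ∈ G : g·W ⊆ W} of the line W equals T if 2i ≠ n, and equals the normalizer N_G(T) of T if 2i = n. -/
noncomputable section

/-- Substitution action on polynomials: `X i ↦ ∑ j, A i j • X j`, i.e. precomposition of a
polynomial function with the linear map given by the matrix `A`. -/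
def substAct (A : Matrix (Fin 2) (Fin 2) ℂ) (f : MvPolynomial (Fin 2) ℂ) :
    MvPolynomial (Fin 2) ℂ :=
  MvPolynomial.aeval (fun i => ∑ j, MvPolynomial.C (A i j) * MvPolynomial.X j) f

/-- The action of an invertible matrix `g` on polynomial functions: `(g • f)(v) = f(g⁻¹ v)`. -/
def polyAct (g : Matrix (Fin 2) (Fin 2) ℂ) (f : MvPolynomial (Fin 2) ℂ) :
    MvPolynomial (Fin 2) ℂ :=
  substAct g⁻¹ f

/-- The standard diagonal maximal torus of `SU(2)`. -/
def TDiag : Set (Matrix (Fin 2) (Fin 2) ℂ) :=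
  {A | A ∈ Matrix.specialUnitaryGroup (Fin 2) ℂ ∧ A 0 1 = 0 ∧ A 1 0 = 0}

/-- The normalizer of the diagonal torus in `SU(2)`. -/
def NTDiag : Set (Matrix (Fin 2) (Fin 2) ℂ) :=
  {g | g ∈ Matrix.specialUnitaryGroup (Fin 2) ℂ ∧ ∀ t ∈ TDiag, g * t * g⁻¹ ∈ TDiag}

/-- The complex line spanned by the monomial `x^i y^(n-i)`. -/
def monLine (n i : ℕ) : Submodule ℂ (MvPolynomial (Fin 2) ℂ) :=
  Submodule.span ℂ
    {MvPolynomial.monomial (Finsupp.single 0 i + Finsupp.single 1 (n - i)) (1 : ℂ)}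

/-! Acting by `g ∈ SU(2)` sends `x^a y^b` to a product `ℓ₀^a ℓ₁^b` of linear forms read off from
`g⁻¹`. If this lies in the line `ℂ · x^a y^b`, evaluating at `(1, 0)` and `(0, 1)` shows that some
entry of `g` vanishes, and unitarity (`|g₀₀| = |g₁₁|`, `|g₀₁| = |g₁₀|`) then makes `g` diagonal or
antidiagonal. Diagonal elements rescale `x^a y^b`; antidiagonal ones send it to a nonzero multiple of
`x^b y^a`, which lies in the line exactly when `a = b`. Conjugating `diag(i, -i)` shows that `N(T)`
consists precisely of the diagonal and antidiagonal elements of `SU(2)`. -/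

open MvPolynomial Matrix

lemma inv_fin_two_of_det_eq_one {R : Type*} [CommRing R] {A : Matrix (Fin 2) (Fin 2) R}
    (hA : A.det = 1) : A⁻¹ = !![A 1 1, -A 0 1; -A 1 0, A 0 0] := by
  rw [inv_def, hA, adjugate_fin_two, Ring.inverse_one, one_smul]

lemma inv_mem_specialUnitaryGroup {n α : Type*} [Fintype n] [DecidableEq n] [CommRing α]
    [StarRing α] {A : Matrix n n α} (hA : A ∈ specialUnitaryGroup n α) :
    A⁻¹ ∈ specialUnitaryGroup n α := by
  rw [inv_eq_left_inv (mem_unitaryGroup_iff'.mp hA.1)]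
  exact (star (⟨A, hA⟩ : specialUnitaryGroup n α)).2

section UnitaryFinTwo

variable {g : Matrix (Fin 2) (Fin 2) ℂ}

lemma norm_sq_entries_of_mem_unitaryGroup (hg : g ∈ unitaryGroup (Fin 2) ℂ) :
    ‖g 0 0‖ ^ 2 + ‖g 0 1‖ ^ 2 = 1 ∧ ‖g 0 0‖ ^ 2 + ‖g 1 0‖ ^ 2 = 1 ∧
      ‖g 1 0‖ ^ 2 + ‖g 1 1‖ ^ 2 = 1 := by
  have row₀ := congrFun (congrFun (mem_unitaryGroup_iff.mp hg) 0) 0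
  have row₁ := congrFun (congrFun (mem_unitaryGroup_iff.mp hg) 1) 1
  have col₀ := congrFun (congrFun (mem_unitaryGroup_iff'.mp hg) 0) 0
  simp only [mul_apply, Fin.sum_univ_two, star_apply, one_apply_eq, RCLike.star_def,
    Complex.mul_conj', Complex.conj_mul'] at row₀ row₁ col₀
  exact ⟨by exact_mod_cast row₀, by exact_mod_cast col₀, by exact_mod_cast row₁⟩

lemma norm_apply_zero_zero_eq (hg : g ∈ unitaryGroup (Fin 2) ℂ) : ‖g 0 0‖ = ‖g 1 1‖ := by
  obtain ⟨-, h₂, h₃⟩ := norm_sq_entries_of_mem_unitaryGroup hg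
  exact (sq_eq_sq₀ (norm_nonneg _) (norm_nonneg _)).mp (by linarith)

lemma norm_apply_zero_one_eq (hg : g ∈ unitaryGroup (Fin 2) ℂ) : ‖g 0 1‖ = ‖g 1 0‖ := by
  obtain ⟨h₁, h₂, -⟩ := norm_sq_entries_of_mem_unitaryGroup hg
  exact (sq_eq_sq₀ (norm_nonneg _) (norm_nonneg _)).mp (by linarith)

lemma diag_or_antidiag_of_apply_eq_zero (hg : g ∈ unitaryGroup (Fin 2) ℂ) {i j : Fin 2}
    (h : g i j = 0) : (g 0 1 = 0 ∧ g 1 0 = 0) ∨ (g 0 0 = 0 ∧ g 1 1 = 0) := by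
  have h₀₀ : g 0 0 = 0 ↔ g 1 1 = 0 := by
    rw [← norm_eq_zero, norm_apply_zero_zero_eq hg, norm_eq_zero]
  have h₀₁ : g 0 1 = 0 ↔ g 1 0 = 0 := by
    rw [← norm_eq_zero, norm_apply_zero_one_eq hg, norm_eq_zero]
  fin_cases i <;> fin_cases j <;> simp_all

end UnitaryFinTwo

lemma diag_I_mem_TDiag : !![Complex.I, 0; 0, -Complex.I] ∈ TDiag := by
  refine ⟨mem_specialUnitaryGroup_iff.mpr ⟨mem_unitaryGroup_iff.mpr ?_, ?_⟩, rfl, rfl⟩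
  · ext i j
    fin_cases i <;> fin_cases j <;> simp [mul_apply, Fin.sum_univ_two, star_apply, one_apply]
  · simp [det_fin_two_of]

lemma mem_NTDiag_iff {g : Matrix (Fin 2) (Fin 2) ℂ} : g ∈ NTDiag ↔
    g ∈ specialUnitaryGroup (Fin 2) ℂ ∧ ((g 0 1 = 0 ∧ g 1 0 = 0) ∨ (g 0 0 = 0 ∧ g 1 1 = 0)) := by
  refine ⟨fun ⟨hg, hnorm⟩ => ⟨hg, ?_⟩, fun ⟨hg, hpattern⟩ => ⟨hg, fun t ht => ?_⟩⟩
  · have hconj : (g * !![Complex.I, 0; 0, -Complex.I] * g⁻¹) 0 1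
        = -2 * Complex.I * (g 0 0 * g 0 1) := by
      rw [inv_fin_two_of_det_eq_one hg.2]
      simp [mul_apply, Fin.sum_univ_two]
      ring
    rw [(hnorm _ diag_I_mem_TDiag).2.1, eq_comm, mul_eq_zero] at hconj
    rcases mul_eq_zero.mp (hconj.resolve_left (by simp)) with h | h
    · exact diag_or_antidiag_of_apply_eq_zero hg.1 h
    · exact diag_or_antidiag_of_apply_eq_zero hg.1 h
  · obtain ⟨ht, ht₀₁, ht₁₀⟩ := ht
    refine ⟨mul_mem (mul_mem hg ht) (inv_mem_specialUnitaryGroup hg), ?_⟩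
    rw [inv_fin_two_of_det_eq_one hg.2]
    rcases hpattern with ⟨h₀₁, h₁₀⟩ | ⟨h₀₀, h₁₁⟩ <;>
      simp [mul_apply, Fin.sum_univ_two, *]

lemma monLine_eq_span (n i : ℕ) :
    monLine n i = ℂ ∙ (X 0 ^ i * X 1 ^ (n - i) : MvPolynomial (Fin 2) ℂ) := by
  rw [monLine, X_pow_eq_monomial, X_pow_eq_monomial, monomial_mul, one_mul]

lemma substAct_X_pow_mul_X_pow (A : Matrix (Fin 2) (Fin 2) ℂ) (a b : ℕ) :
    substAct A (X 0 ^ a * X 1 ^ b) =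
      (C (A 0 0) * X 0 + C (A 0 1) * X 1) ^ a * (C (A 1 0) * X 0 + C (A 1 1) * X 1) ^ b := by
  simp [substAct, Fin.sum_univ_two]

lemma smul_X_pow_mul_X_pow_mem_span_iff {c : ℂ} (hc : c ≠ 0) {a b : ℕ} :
    c • (X 0 ^ b * X 1 ^ a : MvPolynomial (Fin 2) ℂ) ∈ ℂ ∙ (X 0 ^ a * X 1 ^ b) ↔ a = b := by
  refine ⟨fun h => ?_, fun h => h ▸ Submodule.smul_mem _ c (Submodule.mem_span_singleton_self _)⟩
  obtain ⟨k, hk⟩ := Submodule.mem_span_singleton.mp h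
  simp only [X_pow_eq_monomial, monomial_mul, smul_monomial, smul_eq_mul, mul_one,
    monomial_eq_monomial_iff, hc, and_false, or_false] at hk
  simpa using DFunLike.congr_fun hk.1 0

lemma polyAct_smul (g : Matrix (Fin 2) (Fin 2) ℂ) (c : ℂ) (f : MvPolynomial (Fin 2) ℂ) :
    polyAct g (c • f) = c • polyAct g f :=
  map_smul (aeval _) c f

lemma polyAct_stabilizes_span_singleton_iff (g : Matrix (Fin 2) (Fin 2) ℂ)
    (p : MvPolynomial (Fin 2) ℂ) : (∀ f ∈ ℂ ∙ p, polyAct g f ∈ ℂ ∙ p) ↔ polyAct g p ∈ ℂ ∙ p := by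
  refine ⟨fun h => h p (Submodule.mem_span_singleton_self p), fun h f hf => ?_⟩
  obtain ⟨c, rfl⟩ := Submodule.mem_span_singleton.mp hf
  rw [polyAct_smul]
  exact Submodule.smul_mem _ c h

section PolyAct

variable {g : Matrix (Fin 2) (Fin 2) ℂ}

lemma polyAct_X_pow_mul_X_pow (hg : g.det = 1) (a b : ℕ) :
    polyAct g (X 0 ^ a * X 1 ^ b) =
      (C (g 1 1) * X 0 - C (g 0 1) * X 1) ^ a * (C (g 0 0) * X 1 - C (g 1 0) * X 0) ^ b := by
  rw [polyAct, substAct_X_pow_mul_X_pow, inv_fin_two_of_det_eq_one hg]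
  simp only [of_apply, cons_val', cons_val_zero, cons_val_one, empty_val', cons_val_fin_one,
    map_neg]
  ring

lemma polyAct_X_pow_mul_X_pow_of_diag (hg : g.det = 1) (h₀₁ : g 0 1 = 0) (h₁₀ : g 1 0 = 0)
    (a b : ℕ) :
    polyAct g (X 0 ^ a * X 1 ^ b) = (g 1 1 ^ a * g 0 0 ^ b) • (X 0 ^ a * X 1 ^ b) := by
  rw [polyAct_X_pow_mul_X_pow hg, h₀₁, h₁₀, smul_eq_C_mul]
  simp only [C_0, zero_mul, sub_zero, mul_pow, C_mul, C_pow]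
  ring

lemma polyAct_X_pow_mul_X_pow_of_antidiag (hg : g.det = 1) (h₀₀ : g 0 0 = 0) (h₁₁ : g 1 1 = 0)
    (a b : ℕ) :
    polyAct g (X 0 ^ a * X 1 ^ b) = ((-g 0 1) ^ a * (-g 1 0) ^ b) • (X 0 ^ b * X 1 ^ a) := by
  rw [polyAct_X_pow_mul_X_pow hg, h₀₀, h₁₁, smul_eq_C_mul]
  simp only [C_0, zero_mul, zero_sub, neg_mul_eq_neg_mul, ← map_neg, mul_pow, C_mul, C_pow]
  ring

lemma exists_apply_eq_zero_of_polyAct_mem_span (hg : g.det = 1) {a b : ℕ} (hab : a + b ≠ 0)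
    (h : polyAct g (X 0 ^ a * X 1 ^ b) ∈ ℂ ∙ (X 0 ^ a * X 1 ^ b)) : ∃ i j, g i j = 0 := by
  obtain ⟨k, hk⟩ := Submodule.mem_span_singleton.mp h
  rw [polyAct_X_pow_mul_X_pow hg] at hk
  rcases Nat.eq_zero_or_pos b with rfl | hb
  · have := congrArg (aeval ![(0 : ℂ), 1]) hk
    simp [(by simpa using hab : a ≠ 0), eq_comm (a := (0 : ℂ))] at this
    exact ⟨0, 1, this⟩
  · have := congrArg (aeval ![(1 : ℂ), 0]) hk
    simp [hb.ne', eq_comm (a := (0 : ℂ))] at this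
    rcases this with ⟨h, -⟩ | h
    exacts [⟨1, 1, h⟩, ⟨1, 0, h⟩]

lemma polyAct_stabilizes_span_X_pow_mul_X_pow_iff (hg : g ∈ specialUnitaryGroup (Fin 2) ℂ)
    {a b : ℕ} (hab : a + b ≠ 0) :
    (∀ f ∈ ℂ ∙ (X 0 ^ a * X 1 ^ b), polyAct g f ∈ ℂ ∙ (X 0 ^ a * X 1 ^ b)) ↔
      (g 0 1 = 0 ∧ g 1 0 = 0) ∨ (g 0 0 = 0 ∧ g 1 1 = 0) ∧ a = b := by
  have hdet : g.det = 1 := hg.2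
  rw [polyAct_stabilizes_span_singleton_iff]
  constructor
  · intro h
    obtain ⟨i, j, hij⟩ := exists_apply_eq_zero_of_polyAct_mem_span hdet hab h
    refine (diag_or_antidiag_of_apply_eq_zero hg.1 hij).imp_right
      fun ⟨h₀₀, h₁₁⟩ => ⟨⟨h₀₀, h₁₁⟩, ?_⟩
    have hoff : g 0 1 * g 1 0 ≠ 0 := by
      rw [det_fin_two, h₀₀, h₁₁] at hdet
      intro h
      simp [h] at hdet
    have hc : (-g 0 1) ^ a * (-g 1 0) ^ b ≠ 0 := by simp_all
    rwa [polyAct_X_pow_mul_X_pow_of_antidiag hdet h₀₀ h₁₁,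
      smul_X_pow_mul_X_pow_mem_span_iff hc] at h
  · rintro (⟨h₀₁, h₁₀⟩ | ⟨⟨h₀₀, h₁₁⟩, rfl⟩)
    · rw [polyAct_X_pow_mul_X_pow_of_diag hdet h₀₁ h₁₀]
      exact Submodule.smul_mem _ _ (Submodule.mem_span_singleton_self _)
    · rw [polyAct_X_pow_mul_X_pow_of_antidiag hdet h₀₀ h₁₁]
      exact Submodule.smul_mem _ _ (Submodule.mem_span_singleton_self _)

end PolyAct

theorem stabilizer_of_monomial_line_general (n i : ℕ) (hn : 1 ≤ n) :
    (2 * i ≠ n →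
      {g | g ∈ Matrix.specialUnitaryGroup (Fin 2) ℂ ∧
          ∀ f ∈ monLine n i, polyAct g f ∈ monLine n i} = TDiag) ∧
    (2 * i = n →
      {g | g ∈ Matrix.specialUnitaryGroup (Fin 2) ℂ ∧
          ∀ f ∈ monLine n i, polyAct g f ∈ monLine n i} = NTDiag) := by
  have hstab : ∀ g ∈ specialUnitaryGroup (Fin 2) ℂ,
      (∀ f ∈ monLine n i, polyAct g f ∈ monLine n i) ↔
        (g 0 1 = 0 ∧ g 1 0 = 0) ∨ (g 0 0 = 0 ∧ g 1 1 = 0) ∧ 2 * i = n := fun g hg => by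
    rw [monLine_eq_span, polyAct_stabilizes_span_X_pow_mul_X_pow_iff hg (by omega),
      show i = n - i ↔ 2 * i = n by omega]
  refine ⟨fun hne => Set.ext fun g => and_congr_right fun hg => ?_,
    fun heq => Set.ext fun g => ?_⟩
  · simp [hstab g hg, hne]
  · rw [mem_NTDiag_iff]
    exact and_congr_right fun hg => by simp [hstab g hg, heq]

/-- For `SU(2)` acting on complex homogeneous polynomials of degree
`n ≥ 1`, the stabilizer of the line `W = ℂ · x^i y^(n-i)` (`0 ≤ i ≤ n`) equals the diagonal
torus `T` when `2i ≠ n`, and equals the normalizer `N(T)` when `2i = n`. -/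
theorem stabilizer_of_monomial_line (n i : ℕ) (hn : 1 ≤ n) (hi : i ≤ n) :
    (2 * i ≠ n →
      {g | g ∈ Matrix.specialUnitaryGroup (Fin 2) ℂ ∧
          ∀ f ∈ monLine n i, polyAct g f ∈ monLine n i} = TDiag) ∧
    (2 * i = n →
      {g | g ∈ Matrix.specialUnitaryGroup (Fin 2) ℂ ∧
          ∀ f ∈ monLine n i, polyAct g f ∈ monLine n i} = NTDiag) :=
  stabilizer_of_monomial_line_general n i hn

end
end

section
/- Let G be a connected solvable Lie group and let ρ: G → GL(U) be a finite-dimensional complex representation of G on a complex vector space U. Then the only complex linear subspace V ⊆ U that is universal in U is V = U itself. -/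
open Matrix

noncomputable section

open scoped Pointwise

open scoped commutatorElement

universe u v

/-- A continuous complex-valued function with finitely many values on a preconnected
space is constant. -/
lemma continuous_finite_range_constant {X : Type*} [TopologicalSpace X] [PreconnectedSpace X]
    {f : X → ℂ} (hf : Continuous f) {S : Set ℂ} (hS : S.Finite) (hr : ∀ x, f x ∈ S)
    (x y : X) : f x = f y := by
  by_contra hxy
  have hconn : IsPreconnected (Set.range f) := isPreconnected_range hf
  have hfin : (Set.range f).Finite := hS.subset (Set.range_subset_iff.mpr hr)
  set a := f x with ha
  have hu : IsOpen ({a}ᶜ : Set ℂ) := isClosed_singleton.isOpen_compl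
  have hv : IsOpen ((Set.range f \ {a})ᶜ : Set ℂ) := (hfin.subset Set.diff_subset).isClosed.isOpen_compl
  have hcover : Set.range f ⊆ {a}ᶜ ∪ (Set.range f \ {a})ᶜ := by
    intro z hz
    by_cases hza : z = a
    · exact Or.inr (by simp [hza])
    · exact Or.inl hza
  have h1 : (Set.range f ∩ {a}ᶜ).Nonempty := ⟨f y, ⟨Set.mem_range_self y, fun h => hxy (by simpa using h.symm)⟩⟩
  have h2 : (Set.range f ∩ (Set.range f \ {a})ᶜ).Nonempty := ⟨a, ⟨⟨x, rfl⟩, by simp⟩⟩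
  obtain ⟨z, hz, hz1, hz2⟩ := hconn _ _ hu hv hcover h1 h2
  exact hz2 ⟨hz, hz1⟩

section TopGroup

variable {G : Type u} [Group G] [TopologicalSpace G] [IsTopologicalGroup G]

lemma isPreconnected_subgroup_closure {S : Set G} (hS : IsPreconnected S)
    (h1 : (1 : G) ∈ S) (hinv : S⁻¹ = S) :
    IsPreconnected ((Subgroup.closure S : Subgroup G) : Set G) := by
  have hpow : ∀ n : ℕ, IsPreconnected (S ^ n) ∧ (1 : G) ∈ S ^ n := by
    intro n
    induction n with
    | zero =>
      refine ⟨?_, by rw [pow_zero]; exact Set.mem_one.mpr rfl⟩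
      rw [pow_zero, ← Set.singleton_one]
      exact isPreconnected_singleton
    | succ n ih =>
      constructor
      · rw [pow_succ, ← Set.image_mul_prod]
        exact (ih.1.prod hS).image _ continuous_mul.continuousOn
      · rw [pow_succ]
        simpa using Set.mul_mem_mul ih.2 h1
  have hset : ((Subgroup.closure S : Subgroup G) : Set G) = ⋃ n : ℕ, S ^ n := by
    apply Set.Subset.antisymm
    · intro x hx
      induction hx using Subgroup.closure_induction with
      | mem y hy => exact Set.mem_iUnion.mpr ⟨1, by simpa [pow_one] using hy⟩
      | one => exact Set.mem_iUnion.mpr ⟨0, by simp [pow_zero, Set.mem_one]⟩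
      | mul y z hy hz hy' hz' =>
        obtain ⟨m, hm⟩ := Set.mem_iUnion.mp hy'
        obtain ⟨k, hk⟩ := Set.mem_iUnion.mp hz'
        exact Set.mem_iUnion.mpr ⟨m + k, by rw [pow_add]; exact Set.mul_mem_mul hm hk⟩
      | inv y hy hy' =>
        obtain ⟨m, hm⟩ := Set.mem_iUnion.mp hy'
        refine Set.mem_iUnion.mpr ⟨m, ?_⟩
        have : y⁻¹ ∈ (S ^ m)⁻¹ := Set.inv_mem_inv.mpr hm
        rwa [← inv_pow, hinv] at this
    · refine Set.iUnion_subset fun n => ?_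
      induction n with
      | zero => rw [pow_zero]; intro x hx; rw [Set.mem_one] at hx; subst hx; exact (Subgroup.closure S).one_mem
      | succ n ih =>
        rw [pow_succ]
        intro x hx
        rw [← Set.image_mul_prod] at hx
        obtain ⟨⟨y, z⟩, ⟨hy, hz⟩, rfl⟩ := hx
        exact (Subgroup.closure S).mul_mem (ih hy) (Subgroup.subset_closure hz)
  rw [hset]
  apply isPreconnected_iUnion
  · exact ⟨1, Set.mem_iInter.mpr fun n => (hpow n).2⟩
  · exact fun n => (hpow n).1

lemma isConnected_derivedSeries_one [ConnectedSpace G] :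
    IsConnected ((derivedSeries G 1 : Subgroup G) : Set G) := by
  refine ⟨⟨1, (derivedSeries G 1).one_mem⟩, ?_⟩
  rw [derivedSeries_one, commutator_eq_closure]
  apply isPreconnected_subgroup_closure
  · have hrange : commutatorSet G = Set.range (fun p : G × G => ⁅p.1, p.2⁆) := by
      ext x
      simp [mem_commutatorSet_iff, Set.mem_range, Prod.exists]
    rw [hrange]
    apply isPreconnected_range
    simp only [commutatorElement_def]
    exact ((continuous_fst.mul continuous_snd).mul continuous_fst.inv).mul continuous_snd.inv
  · exact one_mem_commutatorSet G
  · ext x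
    simp only [Set.mem_inv, mem_commutatorSet_iff]
    constructor
    · rintro ⟨a, b, hab⟩
      exact ⟨b, a, by rw [← commutatorElement_inv, hab, inv_inv]⟩
    · rintro ⟨a, b, hab⟩
      exact ⟨b, a, by rw [← commutatorElement_inv, hab]⟩

lemma derivedSeries_subgroup_map_le (n : ℕ) :
    (derivedSeries (↥(derivedSeries G 1)) n).map (derivedSeries G 1).subtype
      ≤ derivedSeries G (n + 1) := by
  induction n with
  | zero =>
    rw [derivedSeries_zero, ← MonoidHom.range_eq_map, Subgroup.range_subtype]
  | succ n ih =>
    rw [derivedSeries_succ (↥(derivedSeries G 1)) n, Subgroup.map_commutator,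
      derivedSeries_succ G (n + 1)]
    exact Subgroup.commutator_mono ih ih

lemma derivedSeries_subgroup_eq_bot {n : ℕ} (h : derivedSeries G (n + 1) = ⊥) :
    derivedSeries (↥(derivedSeries G 1)) n = ⊥ := by
  have hle := derivedSeries_subgroup_map_le (G := G) n
  rw [h, le_bot_iff, Subgroup.map_eq_bot_iff] at hle
  rw [eq_bot_iff]
  intro x hx
  have := hle hx
  simp only [MonoidHom.mem_ker, Subgroup.coe_subtype] at this
  exact Subgroup.mem_bot.mpr (Subtype.ext this)

end TopGroup
section KeyLemma

local notation "⟪" x ", " y "⟫" => @inner ℂ _ _ x y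

open Module in
/-- Lie–Kolchin: a connected solvable topological group acting continuously on a nontrivial
finite-dimensional complex inner product space has a common eigenvector. -/
lemma key_common_eigenvector (N : ℕ) :
    ∀ {G : Type u} [Group G] [TopologicalSpace G] [IsTopologicalGroup G] [ConnectedSpace G]
      {U : Type v} [NormedAddCommGroup U] [InnerProductSpace ℂ U] [FiniteDimensional ℂ U]
      (n : ℕ), derivedSeries G n = ⊥ → 0 < finrank ℂ U → finrank ℂ U + n ≤ N →
      ∀ (ρ : G →* (U →ₗ[ℂ] U)), Continuous (fun p : G × U => ρ p.1 p.2) →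
      ∃ v : U, v ≠ 0 ∧ ∀ g : G, ∃ c : ℂ, ρ g v = c • v := by
  induction N with
  | zero =>
    intro G _ _ _ _ U _ _ _ n _ hpos hle
    omega
  | succ N IH =>
    intro G _ _ _ _ U _ _ _ n hder hpos hle ρ hcont
    have hntr : Nontrivial U := Module.finrank_pos_iff.mp hpos
    -- each `ρ g` is injective
    have hinj : ∀ (g : G) (u : U), ρ g u = 0 → u = 0 := by
      intro g u hu
      have h1 : ρ g⁻¹ (ρ g u) = u := by
        rw [← Module.End.mul_apply, ← _root_.map_mul, inv_mul_cancel, _root_.map_one, Module.End.one_apply]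
      rw [hu, _root_.map_zero] at h1
      exact h1.symm
    match n with
    | 0 =>
      -- trivial group
      rw [derivedSeries_zero] at hder
      obtain ⟨v, hv⟩ := exists_ne (0 : U)
      refine ⟨v, hv, fun g => ⟨1, ?_⟩⟩
      have hg : g = 1 := by
        have : g ∈ (⊥ : Subgroup G) := hder ▸ Subgroup.mem_top g
        simpa [Subgroup.mem_bot] using this
      rw [hg, _root_.map_one, Module.End.one_apply, one_smul]
    | (n + 1) =>
      by_cases hred : ∃ W : Submodule ℂ U, W ≠ ⊥ ∧ W ≠ ⊤ ∧ ∀ (g : G), ∀ u ∈ W, ρ g u ∈ W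
      · -- reducible case: restrict to the invariant subspace
        obtain ⟨W, hWbot, hWtop, hWinv⟩ := hred
        let ρW : G →* (↥W →ₗ[ℂ] ↥W) :=
          { toFun := fun g => (ρ g).restrict (hWinv g)
            map_one' := LinearMap.ext fun x => Subtype.ext <| by
              simp [LinearMap.restrict_coe_apply]
            map_mul' := fun a b => LinearMap.ext fun x => Subtype.ext <| by
              simp [LinearMap.restrict_coe_apply, _root_.map_mul, Module.End.mul_apply] }
        have hWcont : Continuous (fun p : G × ↥W => ρW p.1 p.2) := by
          have hc2 : Continuous fun p : G × ↥W => ρ p.1 (p.2 : U) :=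
            hcont.comp (continuous_fst.prodMk (continuous_subtype_val.comp continuous_snd))
          exact hc2.subtype_mk _
        have hWpos : 0 < finrank ℂ ↥W := by
          rw [Module.finrank_pos_iff]
          exact Submodule.nontrivial_iff_ne_bot.mpr hWbot
        have hWlt : finrank ℂ ↥W < finrank ℂ U :=
          Submodule.finrank_lt hWtop
        obtain ⟨v, hv0, hv⟩ := IH (n + 1) hder hWpos (by omega) ρW hWcont
        refine ⟨(v : U), by simpa [Submodule.coe_eq_zero] using hv0, fun g => ?_⟩
        obtain ⟨c, hc⟩ := hv g
        refine ⟨c, ?_⟩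
        have : ((ρW g v : ↥W) : U) = ρ g (v : U) := rfl
        rw [← this, hc]
        simp
      · -- irreducible case
        have hsimp : ∀ W : Submodule ℂ U, (∀ (g : G), ∀ u ∈ W, ρ g u ∈ W) → W = ⊥ ∨ W = ⊤ := by
          intro W hW
          by_contra hcon
          push_neg at hcon
          exact hred ⟨W, hcon.1, hcon.2, hW⟩
        set G' : Subgroup G := derivedSeries G 1 with hG'
        have hG'conn : ConnectedSpace ↥G' := Subtype.connectedSpace isConnected_derivedSeries_one
        have hG'der : derivedSeries ↥G' n = ⊥ := derivedSeries_subgroup_eq_bot hder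
        have hG'cont : Continuous (fun p : ↥G' × U => (ρ.comp G'.subtype) p.1 p.2) :=
          hcont.comp ((continuous_subtype_val.comp continuous_fst).prodMk continuous_snd)
        obtain ⟨v, hv0, hv⟩ := IH n hG'der hpos (by omega) (ρ.comp G'.subtype) hG'cont
        have hvv : ⟪v, v⟫ ≠ 0 := fun h => hv0 (inner_self_eq_zero.mp h)
        have horb : ∀ g : G, ρ g v ≠ 0 := fun g h => hv0 (hinj g v h)
        -- continuity of the orbit map
        have hOrbCont : Continuous fun g : G => ρ g v :=
          hcont.comp (continuous_id.prodMk continuous_const)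
        -- Step 1: elements of G' act on each `ρ g v` by the *same* scalar
        have hconst : ∀ h : G, h ∈ G' → ∀ g : G,
            ρ h (ρ g v) = (⟪v, ρ h v⟫ / ⟪v, v⟫) • ρ g v := by
          intro h hh
          set μ : G → ℂ := fun g => ⟪ρ g v, ρ h (ρ g v)⟫ / ⟪ρ g v, ρ g v⟫ with hμ
          have heig : ∀ g : G, ρ h (ρ g v) = μ g • ρ g v := by
            intro g
            have hmem : g⁻¹ * h * g ∈ G' := by
              have := (derivedSeries_normal G 1).conj_mem h hh g⁻¹
              simpa only [mul_assoc, inv_inv] using this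
            obtain ⟨c, hc⟩ := hv ⟨g⁻¹ * h * g, hmem⟩
            have hc' : ρ (g⁻¹ * h * g) v = c • v := hc
            have key : ρ h (ρ g v) = c • ρ g v := by
              have h1 : h * g = g * (g⁻¹ * h * g) := by group
              calc ρ h (ρ g v) = ρ (h * g) v := by rw [_root_.map_mul, Module.End.mul_apply]
                _ = ρ g (ρ (g⁻¹ * h * g) v) := by rw [h1, _root_.map_mul, Module.End.mul_apply]
                _ = c • ρ g v := by rw [hc', _root_.map_smul]
            have hμg : μ g = c := by
              rw [hμ]
              simp only
              rw [key, inner_smul_right, mul_div_assoc, div_self (by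
                exact fun hz => horb g (inner_self_eq_zero.mp hz)), mul_one]
            rw [hμg]
            exact key
          have hμcont : Continuous μ := by
            have h2 : Continuous fun g : G => ρ h (ρ g v) :=
              (ρ h).continuous_of_finiteDimensional.comp hOrbCont
            exact ((hOrbCont.inner h2).div (hOrbCont.inner hOrbCont)
              (fun g hz => horb g (inner_self_eq_zero.mp hz)))
          have hμfin : ∀ g : G, μ g ∈ {c : ℂ | Module.End.HasEigenvalue (ρ h) c} := by
            intro g
            exact Module.End.hasEigenvalue_of_hasEigenvector
              (Module.End.hasEigenvector_iff.mpr
                ⟨Module.End.mem_eigenspace_iff.mpr (heig g), horb g⟩)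
          have hμc : ∀ g : G, μ g = μ 1 := fun g =>
            continuous_finite_range_constant hμcont
              (Module.End.finite_hasEigenvalue (ρ h)) hμfin g 1
          intro g
          have hμ1 : μ 1 = ⟪v, ρ h v⟫ / ⟪v, v⟫ := by
            rw [hμ]
            simp [_root_.map_one, Module.End.one_apply]
          rw [← hμ1, ← hμc g]
          exact heig g
        -- Step 2: elements of G' act on all of U by scalars
        have hscal : ∀ h : G, h ∈ G' → ∀ u : U,
            ρ h u = (⟪v, ρ h v⟫ / ⟪v, v⟫) • u := by
          intro h hh
          set c : ℂ := ⟪v, ρ h v⟫ / ⟪v, v⟫ with hc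
          set W : Submodule ℂ U := Submodule.span ℂ (Set.range fun g : G => ρ g v) with hW
          have hWinv : ∀ (g : G), ∀ u ∈ W, ρ g u ∈ W := by
            intro g u hu
            have : Submodule.map (ρ g) W ≤ W := by
              rw [hW, Submodule.map_span]
              apply Submodule.span_mono
              rintro x ⟨y, ⟨g', rfl⟩, rfl⟩
              refine ⟨g * g', ?_⟩
              show ρ (g * g') v = ρ g (ρ g' v)
              rw [_root_.map_mul, Module.End.mul_apply]
            exact this ⟨u, hu, rfl⟩
          have hWne : W ≠ ⊥ := by
            intro hbot
            apply hv0
            have hvW : v ∈ W := Submodule.subset_span ⟨1, by simp⟩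
            rw [hbot, Submodule.mem_bot] at hvW
            exact hvW
          have hWtop : W = ⊤ := (hsimp W hWinv).resolve_left hWne
          have hle : W ≤ Module.End.eigenspace (ρ h) c := by
            rw [hW, Submodule.span_le]
            rintro x ⟨g, rfl⟩
            exact Module.End.mem_eigenspace_iff.mpr (hconst h hh g)
          intro u
          exact Module.End.mem_eigenspace_iff.mp (hle (hWtop ▸ Submodule.mem_top))
        -- Step 3: commutators act trivially, so the image of `ρ` is commutative
        have hcomm : ∀ a b : G, ρ (a * b) = ρ (b * a) := by
          have hmemG' : ∀ a b : G, ⁅a, b⁆ ∈ G' := by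
            intro a b
            rw [hG', derivedSeries_one, commutator_def]
            exact Subgroup.commutator_mem_commutator (Subgroup.mem_top a) (Subgroup.mem_top b)
          set d : ℕ := finrank ℂ U with hd
          set ν : G × G → ℂ := fun p => ⟪v, ρ ⁅p.1, p.2⁆ v⟫ / ⟪v, v⟫ with hν
          have hν_scal : ∀ p : G × G, ∀ u : U, ρ ⁅p.1, p.2⁆ u = ν p • u := fun p =>
            hscal ⁅p.1, p.2⁆ (hmemG' p.1 p.2)
          have hν_cont : Continuous ν := by
            have k1 : Continuous fun p : G × G => ρ p.2⁻¹ v :=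
              hcont.comp ((continuous_snd.inv).prodMk continuous_const)
            have k2 : Continuous fun p : G × G => ρ p.1⁻¹ (ρ p.2⁻¹ v) :=
              hcont.comp ((continuous_fst.inv).prodMk k1)
            have k3 : Continuous fun p : G × G => ρ p.2 (ρ p.1⁻¹ (ρ p.2⁻¹ v)) :=
              hcont.comp (continuous_snd.prodMk k2)
            have k4 : Continuous fun p : G × G => ρ p.1 (ρ p.2 (ρ p.1⁻¹ (ρ p.2⁻¹ v))) :=
              hcont.comp (continuous_fst.prodMk k3)
            have hrw : ν = fun p : G × G =>
                ⟪v, ρ p.1 (ρ p.2 (ρ p.1⁻¹ (ρ p.2⁻¹ v)))⟫ / ⟪v, v⟫ := by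
              funext p
              rw [hν]
              simp only [commutatorElement_def, _root_.map_mul, Module.End.mul_apply]
            rw [hrw]
            exact (continuous_const.inner k4).div continuous_const (fun _ => hvv)
          have hν_root : ∀ p : G × G, ν p ∈ {z : ℂ | z ^ d = 1} := by
            intro p
            have hop : ρ ⁅p.1, p.2⁆ = ν p • (1 : U →ₗ[ℂ] U) := by
              apply LinearMap.ext
              intro u
              rw [hν_scal p u]
              simp
            have hdet1 : LinearMap.det (ρ ⁅p.1, p.2⁆) = 1 := by
              have hmk : ∀ x : G, LinearMap.det (ρ x) * LinearMap.det (ρ x⁻¹) = 1 := by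
                intro x
                rw [← _root_.map_mul LinearMap.det, ← _root_.map_mul ρ, mul_inv_cancel, _root_.map_one, _root_.map_one]
              calc LinearMap.det (ρ ⁅p.1, p.2⁆)
                  = LinearMap.det (ρ p.1) * LinearMap.det (ρ p.2) * LinearMap.det (ρ p.1⁻¹) *
                    LinearMap.det (ρ p.2⁻¹) := by
                    rw [commutatorElement_def, _root_.map_mul ρ, _root_.map_mul ρ, _root_.map_mul ρ,
                      _root_.map_mul LinearMap.det, _root_.map_mul LinearMap.det, _root_.map_mul LinearMap.det]
                _ = (LinearMap.det (ρ p.1) * LinearMap.det (ρ p.1⁻¹)) *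
                    (LinearMap.det (ρ p.2) * LinearMap.det (ρ p.2⁻¹)) := by ring
                _ = 1 := by rw [hmk, hmk, one_mul]
            have hid : LinearMap.det (1 : U →ₗ[ℂ] U) = 1 := LinearMap.det_id
            rw [hop, LinearMap.det_smul, hid, mul_one] at hdet1
            exact hdet1
          have hν_one : ν (1, 1) = 1 := by
            rw [hν]
            simp only [commutatorElement_def]
            simp [hvv, hv0]
          have hν_const : ∀ p : G × G, ν p = 1 := by
            intro p
            have := continuous_finite_range_constant hν_cont
              ((Polynomial.nthRootsFinset d (1 : ℂ)).finite_toSet.subset ?_) hν_root p (1, 1)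
            · rw [this, hν_one]
            · intro z hz
              rw [Finset.mem_coe, Polynomial.mem_nthRootsFinset hpos (1 : ℂ)]
              exact hz
          intro a b
          apply LinearMap.ext
          intro u
          have h1 : ρ ⁅a, b⁆ (ρ (b * a) u) = ρ (b * a) u := by
            rw [hν_scal (a, b) (ρ (b * a) u), hν_const (a, b), one_smul]
          calc ρ (a * b) u = ρ (⁅a, b⁆ * (b * a)) u := by
                congr 1
                group
            _ = ρ ⁅a, b⁆ (ρ (b * a) u) := by rw [_root_.map_mul, Module.End.mul_apply]
            _ = ρ (b * a) u := h1
        -- Step 4: a commuting family acting irreducibly acts by scalars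
        refine ⟨v, hv0, fun g => ?_⟩
        obtain ⟨c, hc⟩ := Module.End.exists_eigenvalue (ρ g)
        have hE : Module.End.eigenspace (ρ g) c ≠ ⊥ := Module.End.hasEigenvalue_iff.mp hc
        have hEinv : ∀ (g' : G), ∀ u ∈ Module.End.eigenspace (ρ g) c,
            ρ g' u ∈ Module.End.eigenspace (ρ g) c := by
          intro g' u hu
          rw [Module.End.mem_eigenspace_iff] at hu ⊢
          calc ρ g (ρ g' u) = ρ (g * g') u := by rw [_root_.map_mul, Module.End.mul_apply]
            _ = ρ (g' * g) u := by rw [hcomm g g']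
            _ = ρ g' (ρ g u) := by rw [_root_.map_mul, Module.End.mul_apply]
            _ = ρ g' (c • u) := by rw [hu]
            _ = c • ρ g' u := by rw [_root_.map_smul]
        have hEtop : Module.End.eigenspace (ρ g) c = ⊤ :=
          (hsimp _ hEinv).resolve_left hE
        exact ⟨c, Module.End.mem_eigenspace_iff.mp (hEtop ▸ Submodule.mem_top)⟩

end KeyLemma
section UnivLemma

local notation "⟪" x ", " y "⟫" => @inner ℂ _ _ x y

open Module in
lemma universal_subspace_aux (D : ℕ) :
    ∀ {G : Type u} [Group G] [TopologicalSpace G] [IsTopologicalGroup G] [ConnectedSpace G]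
      [Group.IsSolvable G] {U : Type v} [NormedAddCommGroup U] [InnerProductSpace ℂ U]
      [FiniteDimensional ℂ U], finrank ℂ U ≤ D →
      ∀ (ρ : G →* (U →ₗ[ℂ] U)), Continuous (fun p : G × U => ρ p.1 p.2) →
      ∀ V : Submodule ℂ U, (∀ u : U, ∃ g : G, ρ g u ∈ V) → V = ⊤ := by
  induction D with
  | zero =>
    intro G _ _ _ _ _ U _ _ _ hle ρ hcont V huniv
    have : Subsingleton U := finrank_zero_iff.mp (Nat.le_zero.mp hle)
    exact Submodule.eq_top_iff'.mpr fun x => by rw [Subsingleton.elim x 0]; exact V.zero_mem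
  | succ D IH =>
    intro G _ _ _ _ _ U _ _ _ hle ρ hcont V huniv
    by_cases hD : finrank ℂ U ≤ D
    · exact IH hD ρ hcont V huniv
    have hrank : finrank ℂ U = D + 1 := le_antisymm hle (not_le.mp hD)
    by_contra hV
    -- a nonzero functional vanishing on `V`
    obtain ⟨u₀, hu₀⟩ : ∃ u₀ : U, u₀ ∉ V := by
      by_contra hcon
      push_neg at hcon
      exact hV (Submodule.eq_top_iff'.mpr hcon)
    have hq0 : Submodule.Quotient.mk (p := V) u₀ ≠ 0 := by
      rw [Ne, Submodule.Quotient.mk_eq_zero]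
      exact hu₀
    obtain ⟨ψ, hψ⟩ : ∃ ψ : Module.Dual ℂ (U ⧸ V), ψ (Submodule.Quotient.mk u₀) ≠ 0 := by
      by_contra hcon
      push_neg at hcon
      exact hq0 ((Module.forall_dual_apply_eq_zero_iff ℂ _).mp hcon)
    set φ : U →ₗ[ℂ] ℂ := ψ ∘ₗ V.mkQ with hφ
    have hφu₀ : φ u₀ ≠ 0 := hψ
    set K : Submodule ℂ U := LinearMap.ker φ with hK
    have hVK : V ≤ K := by
      intro x hx
      rw [hK, LinearMap.mem_ker, hφ, LinearMap.comp_apply, Submodule.mkQ_apply,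
        (Submodule.Quotient.mk_eq_zero V).mpr hx, _root_.map_zero]
    have hKuniv : ∀ u : U, ∃ g : G, ρ g u ∈ K := fun u => (huniv u).imp fun _ hg => hVK hg
    -- the adjoint representation `g ↦ (ρ g⁻¹)†`
    set σ : G →* (U →ₗ[ℂ] U) :=
      { toFun := fun g => LinearMap.adjoint (ρ g⁻¹)
        map_one' := by
          show LinearMap.adjoint (ρ (1 : G)⁻¹) = 1
          rw [inv_one, _root_.map_one, ← LinearMap.star_eq_adjoint, star_one]
        map_mul' := fun a b => by
          show LinearMap.adjoint (ρ (a * b)⁻¹) =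
            LinearMap.adjoint (ρ a⁻¹) * LinearMap.adjoint (ρ b⁻¹)
          rw [_root_.mul_inv_rev, _root_.map_mul]
          exact LinearMap.adjoint_comp _ _ }
      with hσ
    have hσapp : ∀ g : G, σ g = LinearMap.adjoint (ρ g⁻¹) := fun g => rfl
    have hσcont : Continuous (fun p : G × U => σ p.1 p.2) := by
      set b := stdOrthonormalBasis ℂ U with hb
      have hrepr : (fun p : G × U => σ p.1 p.2) =
          fun p : G × U => ∑ i, (starRingEnd ℂ) ⟪p.2, ρ p.1⁻¹ (b i)⟫ • b i := by
        funext p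
        conv_lhs => rw [← b.sum_repr' (σ p.1 p.2)]
        refine Finset.sum_congr rfl fun i _ => ?_
        congr 1
        rw [← inner_conj_symm]
        congr 1
        exact LinearMap.adjoint_inner_left _ _ _
      rw [hrepr]
      apply continuous_finset_sum
      intro i _
      refine Continuous.smul ?_ continuous_const
      exact Continuous.star
        (Continuous.inner continuous_snd (hcont.comp ((continuous_fst.inv).prodMk continuous_const)))
    obtain ⟨nsol, hnsol⟩ := Group.IsSolvable.solvable (G := G)
    have hpos : 0 < finrank ℂ U := by omega
    obtain ⟨w, hw0, hw⟩ :=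
      key_common_eigenvector (finrank ℂ U + nsol) nsol hnsol hpos le_rfl σ hσcont
    have hww : ⟪w, w⟫ ≠ 0 := fun h => hw0 (inner_self_eq_zero.mp h)
    have hadj : ∀ (g : G) (u : U), ⟪w, ρ g u⟫ = ⟪σ g⁻¹ w, u⟫ := by
      intro g u
      have h1 : σ g⁻¹ = LinearMap.adjoint (ρ g) := by rw [hσapp, inv_inv]
      rw [h1, LinearMap.adjoint_inner_left]
    have hscalar : ∀ g : G, ∃ c : ℂ, c ≠ 0 ∧ σ g w = c • w := by
      intro g
      obtain ⟨c, hc⟩ := hw g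
      refine ⟨c, fun h0 => ?_, hc⟩
      rw [h0, zero_smul] at hc
      apply hw0
      have h1 : σ g⁻¹ (σ g w) = w := by
        rw [← Module.End.mul_apply, ← _root_.map_mul, inv_mul_cancel, _root_.map_one,
          Module.End.one_apply]
      rw [hc, _root_.map_zero] at h1
      exact h1.symm
    set H : Submodule ℂ U := LinearMap.ker ((innerSL ℂ w : U →L[ℂ] ℂ) : U →ₗ[ℂ] ℂ) with hH
    have hmemH : ∀ u : U, u ∈ H ↔ ⟪w, u⟫ = 0 := by
      intro u
      rw [hH, LinearMap.mem_ker]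
      constructor
      · intro h; rw [← h]; rfl
      · intro h; rw [← h]; rfl
    have hHinv : ∀ (g : G), ∀ u ∈ H, ρ g u ∈ H := by
      intro g u hu
      rw [hmemH] at hu ⊢
      obtain ⟨c, hc0, hc⟩ := hscalar g⁻¹
      rw [hadj g u, hc, inner_smul_left, hu, mul_zero]
    by_cases hKH : K = H
    · -- `w`'s orbit never meets `H = K`, contradicting universality
      obtain ⟨g, hg⟩ := hKuniv w
      rw [hKH, hmemH] at hg
      obtain ⟨c, hc0, hc⟩ := hscalar g⁻¹
      rw [hadj g w, hc, inner_smul_left] at hg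
      rcases mul_eq_zero.mp hg with h | h
      · exact hc0 (star_eq_zero.mp h)
      · exact hww h
    · -- restrict everything to the invariant hyperplane `H`
      have hHne : H ≠ ⊤ := by
        intro htop
        apply hww
        rw [← hmemH w, htop]
        exact Submodule.mem_top
      have hHrank : finrank ℂ ↥H < finrank ℂ U :=
        Submodule.finrank_lt hHne
      let ρH : G →* (↥H →ₗ[ℂ] ↥H) :=
        { toFun := fun g => (ρ g).restrict (hHinv g)
          map_one' := LinearMap.ext fun x => Subtype.ext <| by
            simp [LinearMap.restrict_coe_apply]
          map_mul' := fun a b => LinearMap.ext fun x => Subtype.ext <| by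
            simp [LinearMap.restrict_coe_apply, _root_.map_mul, Module.End.mul_apply] }
      have hHcont : Continuous (fun p : G × ↥H => ρH p.1 p.2) := by
        have hc2 : Continuous fun p : G × ↥H => ρ p.1 (p.2 : U) :=
          hcont.comp (continuous_fst.prodMk (continuous_subtype_val.comp continuous_snd))
        exact hc2.subtype_mk _
      set K' : Submodule ℂ ↥H := K.comap H.subtype with hK'
      have hK'univ : ∀ u : ↥H, ∃ g : G, ρH g u ∈ K' := by
        intro u
        obtain ⟨g, hg⟩ := hKuniv (u : U)
        refine ⟨g, ?_⟩
        rw [hK', Submodule.mem_comap]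
        exact hg
      have hK'top : K' = ⊤ := IH (by omega) ρH hHcont K' hK'univ
      have hHK : H ≤ K := by
        intro x hx
        have hmem : (⟨x, hx⟩ : ↥H) ∈ K' := hK'top ▸ Submodule.mem_top
        rw [hK', Submodule.mem_comap] at hmem
        exact hmem
      have hker : ∀ ξ : U →ₗ[ℂ] ℂ, ξ ≠ 0 → finrank ℂ ↥(LinearMap.ker ξ) = D := by
        intro ξ hξ
        have hrne : LinearMap.range ξ ≠ ⊥ := by
          intro hbot
          apply hξ
          apply LinearMap.ext
          intro x
          have : ξ x ∈ LinearMap.range ξ := LinearMap.mem_range_self ξ x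
          rw [hbot, Submodule.mem_bot] at this
          simp [this]
        obtain ⟨c, hcmem, hc0⟩ := Submodule.exists_mem_ne_zero_of_ne_bot hrne
        have hrtop : LinearMap.range ξ = ⊤ := by
          rw [Submodule.eq_top_iff']
          intro x
          have := Submodule.smul_mem (LinearMap.range ξ) (x / c) hcmem
          rwa [smul_eq_mul, div_mul_cancel₀ x hc0] at this
        have hsum := LinearMap.finrank_range_add_finrank_ker ξ
        rw [hrtop, finrank_top, Module.finrank_self, hrank] at hsum
        omega
      have hφ0 : φ ≠ 0 := by
        intro h0
        apply hφu₀
        rw [h0]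
        rfl
      have hw0' : ((innerSL ℂ w : U →L[ℂ] ℂ) : U →ₗ[ℂ] ℂ) ≠ 0 := by
        intro h0
        apply hww
        have : ((innerSL ℂ w : U →L[ℂ] ℂ) : U →ₗ[ℂ] ℂ) w = 0 := by rw [h0]; rfl
        exact this
      have hfr : finrank ℂ ↥K ≤ finrank ℂ ↥H := by
        rw [hK, hker φ hφ0, hH, hker _ hw0']
      exact hKH (Submodule.eq_of_le_of_finrank_le hHK hfr).symm

end UnivLemma
end

/-- If `G` is a connected solvable Lie group and `ρ : G → GL(U)` is a
finite-dimensional complex representation of `G` (here realized as a continuous homomorphism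
into `GL(m, ℂ)` acting on `U = ℂᵐ`), then the only complex linear subspace `V ⊆ U` that is
universal (i.e. every `G`-orbit meets `V`) is `U` itself. -/
theorem universal_subspace_of_solvable_eq_top
    {E HM G : Type*} [NormedAddCommGroup E] [NormedSpace ℝ E] [FiniteDimensional ℝ E]
    [TopologicalSpace HM] (I : ModelWithCorners ℝ E HM)
    [TopologicalSpace G] [ChartedSpace HM G] [Group G] [IsTopologicalGroup G] [LieGroup I (⊤ : ℕ∞) G]
    [ConnectedSpace G] [Group.IsSolvable G]
    {m : ℕ} (ρ : G →* GL (Fin m) ℂ)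
    (hρ : Continuous fun g : G => (ρ g : Matrix (Fin m) (Fin m) ℂ))
    (V : Submodule ℂ (Fin m → ℂ))
    (huniv : ∀ u : Fin m → ℂ, ∃ g : G, ((ρ g : Matrix (Fin m) (Fin m) ℂ)).mulVec u ∈ V) :
    V = ⊤ := by
  classical
  set Ue := EuclideanSpace ℂ (Fin m) with hUe
  let e : Ue ≃ₗ[ℂ] (Fin m → ℂ) := WithLp.linearEquiv 2 ℂ (Fin m → ℂ)
  let ρ' : G →* (Ue →ₗ[ℂ] Ue) :=
    { toFun := fun g => e.symm.toLinearMap ∘ₗ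
        (Matrix.mulVecLin (ρ g : Matrix (Fin m) (Fin m) ℂ)) ∘ₗ e.toLinearMap
      map_one' := by
        apply LinearMap.ext
        intro x
        show e.symm (Matrix.mulVecLin ((ρ 1 : GL (Fin m) ℂ) : Matrix (Fin m) (Fin m) ℂ) (e x)) = x
        rw [_root_.map_one, Units.val_one, Matrix.mulVecLin_one, LinearMap.id_apply,
          LinearEquiv.symm_apply_apply]
      map_mul' := fun a b => by
        apply LinearMap.ext
        intro x
        show e.symm (Matrix.mulVecLin ((ρ (a * b) : GL (Fin m) ℂ) : Matrix (Fin m) (Fin m) ℂ) (e x))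
          = e.symm (Matrix.mulVecLin ((ρ a : GL (Fin m) ℂ) : Matrix (Fin m) (Fin m) ℂ)
            (e (e.symm (Matrix.mulVecLin ((ρ b : GL (Fin m) ℂ) : Matrix (Fin m) (Fin m) ℂ) (e x)))))
        rw [LinearEquiv.apply_symm_apply, _root_.map_mul, Units.val_mul, Matrix.mulVecLin_mul,
          LinearMap.comp_apply] }
  have hρ'app : ∀ (g : G) (u : Ue),
      ρ' g u = e.symm (((ρ g : Matrix (Fin m) (Fin m) ℂ)).mulVec (e u)) := fun g u => rfl
  have hcont : Continuous fun p : G × Ue => ρ' p.1 p.2 := by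
    let eL := PiLp.continuousLinearEquiv 2 ℂ (fun _ : Fin m => ℂ)
    have h1 : Continuous fun p : G × Ue =>
        ((ρ p.1 : Matrix (Fin m) (Fin m) ℂ)).mulVec (eL p.2) := by
      apply continuous_pi
      intro i
      simp only [Matrix.mulVec, dotProduct]
      apply continuous_finset_sum
      intro j _
      have hentry : Continuous fun p : G × Ue => (ρ p.1 : Matrix (Fin m) (Fin m) ℂ) i j :=
        (continuous_apply j).comp ((continuous_apply i).comp (hρ.comp continuous_fst))
      have hcoord : Continuous fun p : G × Ue => (eL p.2) j :=
        (continuous_apply j).comp (eL.continuous.comp continuous_snd)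
      exact hentry.mul hcoord
    have h2 : Continuous fun p : G × Ue =>
        eL.symm (((ρ p.1 : Matrix (Fin m) (Fin m) ℂ)).mulVec (eL p.2)) :=
      eL.symm.continuous.comp h1
    exact h2
  let V' : Submodule ℂ Ue := V.comap e.toLinearMap
  have huniv' : ∀ u : Ue, ∃ g : G, ρ' g u ∈ V' := by
    intro u
    obtain ⟨g, hg⟩ := huniv (e u)
    refine ⟨g, ?_⟩
    rw [Submodule.mem_comap, hρ'app]
    show e (e.symm _) ∈ V
    rw [LinearEquiv.apply_symm_apply]
    exact hg
  have hV' : V' = ⊤ :=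
    universal_subspace_aux (Module.finrank ℂ Ue) le_rfl ρ' hcont V' huniv'
  rw [Submodule.eq_top_iff']
  intro x
  have hx : e.symm x ∈ V' := hV' ▸ Submodule.mem_top
  rw [Submodule.mem_comap] at hx
  show x ∈ V
  have : e.toLinearMap (e.symm x) = x := e.apply_symm_apply x
  rwa [this] at hx
end

section
/- Let G = SU(2) × SU(2) act on U = 𝔰𝔩(2,ℂ) ⊕ 𝔰𝔩(2,ℂ) by the complexified adjoint representation (componentwise conjugation). Let V₁ ⊆ 𝔰𝔩(2,ℂ) be the subspace of upper-triangular traceless matrices and V₂ ⊆ 𝔰𝔩(2,ℂ) the subspace of zero-diagonal matrices, and set V = V₁ ⊕ V₂. Then V is a universal subspace for G, and the stabilizer G_V = {g ∈ G : Ad_g(V) ⊆ V} equals T × N(T), where T is the diagonal maximal torus of SU(2) and N(T) its normalizer in SU(2). -/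
open Matrix

/-- `V₁`: upper-triangular traceless `2 × 2` complex matrices. -/
def V1 : Set (Matrix (Fin 2) (Fin 2) ℂ) := {X | X.trace = 0 ∧ X 1 0 = 0}

/-- `V₂`: traceless `2 × 2` complex matrices with zero diagonal. -/
def V2 : Set (Matrix (Fin 2) (Fin 2) ℂ) := {X | X 0 0 = 0 ∧ X 1 1 = 0}

local notation "SU2" => Matrix.specialUnitaryGroup (Fin 2) ℂ
local notation "conj'" => starRingEnd ℂ

lemma mem_SU2 (g : Matrix (Fin 2) (Fin 2) ℂ) : g ∈ SU2 ↔ g * star g = 1 ∧ g.det = 1 := by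
  rw [Matrix.mem_specialUnitaryGroup_iff, Matrix.mem_unitaryGroup_iff]

lemma inv_of_SU2 {g : Matrix (Fin 2) (Fin 2) ℂ} (hg : g ∈ SU2) : g⁻¹ = star g :=
  Matrix.inv_eq_right_inv ((mem_SU2 g).mp hg).1

lemma star_eq_adj {g : Matrix (Fin 2) (Fin 2) ℂ} (hg : g ∈ SU2) : star g = g.adjugate := by
  obtain ⟨h1, h2⟩ := (mem_SU2 g).mp hg
  have h3 : g * g.adjugate = 1 := by rw [Matrix.mul_adjugate, h2, one_smul]
  have h4 : star g * g = 1 := by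
    rw [Matrix.mem_specialUnitaryGroup_iff, Matrix.mem_unitaryGroup_iff'] at hg
    exact hg.1
  calc star g = star g * (g * g.adjugate) := by rw [h3, mul_one]
    _ = (star g * g) * g.adjugate := by rw [mul_assoc]
    _ = g.adjugate := by rw [h4, one_mul]

lemma entries_of_SU2 {g : Matrix (Fin 2) (Fin 2) ℂ} (hg : g ∈ SU2) :
    g 1 1 = conj' (g 0 0) ∧ g 1 0 = -conj' (g 0 1) := by
  have h := star_eq_adj hg
  rw [Matrix.adjugate_fin_two] at h
  constructor
  · have := congrFun (congrFun h 0) 0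
    simpa [Matrix.star_apply] using this.symm
  · have := congrFun (congrFun h 0) 1
    simp [Matrix.star_apply] at this
    have h2 := congrArg (starRingEnd ℂ) this
    simp at h2
    rw [h2]

/-- standard SU(2) matrix from a unit vector -/
def mk2 (a b : ℂ) : Matrix (Fin 2) (Fin 2) ℂ := !![a, b; -(starRingEnd ℂ b), starRingEnd ℂ a]

lemma mk2_mem {a b : ℂ} (h : a * conj' a + b * conj' b = 1) : mk2 a b ∈ SU2 := by
  rw [mem_SU2]
  constructor
  · ext i j
    fin_cases i <;> fin_cases j <;>
      simp [mk2, Matrix.mul_apply, Fin.sum_univ_two, Matrix.star_apply, Matrix.one_apply] <;>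
      ring_nf <;> linear_combination h
  · simp [mk2, Matrix.det_fin_two]
    linear_combination h

lemma mk2_inv {a b : ℂ} (h : a * conj' a + b * conj' b = 1) :
    (mk2 a b)⁻¹ = !![conj' a, -b; conj' b, a] := by
  apply Matrix.inv_eq_right_inv
  ext i j
  fin_cases i <;> fin_cases j <;>
    simp [mk2, Matrix.mul_apply, Fin.sum_univ_two, Matrix.one_apply] <;>
    ring_nf <;> linear_combination h

lemma triangularize (X : Matrix (Fin 2) (Fin 2) ℂ) (hX : X.trace = 0) :
    ∃ g ∈ SU2, (g * X * g⁻¹).trace = 0 ∧ (g * X * g⁻¹) 1 0 = 0 := by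
  set p := X 0 0 with hp
  set q := X 0 1 with hq
  set r := X 1 0 with hr
  have h11 : X 1 1 = -p := by
    rw [Matrix.trace_fin_two] at hX; linear_combination hX
  have hXe : X = !![p, q; r, -p] := by
    rw [Matrix.eta_fin_two X, h11]
  obtain ⟨l, hl⟩ := IsAlgClosed.exists_pow_nat_eq (k := ℂ) (p ^ 2 + q * r) (n := 2) (by norm_num)
  -- find a nonzero eigenvector, or X = 0
  have key : (∃ v0 v1 : ℂ, ¬(v0 = 0 ∧ v1 = 0) ∧ p * v0 + q * v1 = l * v0 ∧
      r * v0 - p * v1 = l * v1) ∨ X = 0 := by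
    by_cases h1 : l + p = 0 ∧ r = 0
    · by_cases h2 : q = 0 ∧ l - p = 0
      · right
        have hp0 : p = 0 := by
          have := h1.1; have := h2.2
          have : p = 0 := by linear_combination (h1.1 - h2.2) / 2
          exact this
        rw [hXe, hp0, h2.1, h1.2]
        ext i j; fin_cases i <;> fin_cases j <;> simp
      · left
        refine ⟨q, l - p, by tauto, by ring, ?_⟩
        linear_combination -hl
    · left
      refine ⟨l + p, r, by tauto, ?_, by ring⟩
      linear_combination -hl
  rcases key with ⟨v0, v1, hv, E0, E1⟩ | hX0
  · -- normalize
    have hvpos : 0 < Complex.normSq v0 + Complex.normSq v1 := by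
      rcases not_and_or.mp hv with h | h
      · have h1 := Complex.normSq_pos.mpr h
        have h2 := Complex.normSq_nonneg v1
        linarith
      · have h1 := Complex.normSq_pos.mpr h
        have h2 := Complex.normSq_nonneg v0
        linarith
    set n : ℝ := Real.sqrt (Complex.normSq v0 + Complex.normSq v1) with hn
    have hnpos : 0 < n := Real.sqrt_pos.mpr hvpos
    have hn2 : (n : ℝ) ^ 2 = Complex.normSq v0 + Complex.normSq v1 := Real.sq_sqrt hvpos.le
    have hnne : (n : ℂ) ≠ 0 := by
      simpa using Complex.ofReal_ne_zero.mpr hnpos.ne'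
    set a : ℂ := v0 / n with ha
    set b : ℂ := v1 / n with hb
    have hconjn : conj' (n : ℂ) = (n : ℂ) := Complex.conj_ofReal n
    have hunit : a * conj' a + b * conj' b = 1 := by
      rw [ha, hb]
      rw [map_div₀, map_div₀, hconjn]
      field_simp
      rw [Complex.mul_conj, Complex.mul_conj]
      norm_cast
      rw [← hn2]
    have Ea : p * a + q * b = l * a := by
      rw [ha, hb]; field_simp; linear_combination E0
    have Eb : r * a - p * b = l * b := by
      rw [ha, hb]; field_simp; linear_combination E1
    set g := mk2 (conj' a) (conj' b) with hg
    have hunit' : conj' a * conj' (conj' a) + conj' b * conj' (conj' b) = 1 := by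
      simp only [Complex.conj_conj]
      linear_combination hunit
    have hgmem : g ∈ SU2 := mk2_mem hunit'
    have hginv : g⁻¹ = !![a, -(conj' b); b, conj' a] := by
      have := mk2_inv hunit'
      simpa [Complex.conj_conj] using this
    refine ⟨g, hgmem, ?_, ?_⟩
    · have hinv : g⁻¹ * g = 1 := Matrix.nonsing_inv_mul g ?_
      · rw [Matrix.trace_mul_cycle, hinv, one_mul, hX]
      · rw [((mem_SU2 g).mp hgmem).2]; exact isUnit_one
    · rw [hginv, hXe, hg]
      simp [mk2, Matrix.mul_apply, Fin.sum_univ_two, Complex.conj_conj]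
      ring_nf
      linear_combination a * Eb - b * Ea
  · exact ⟨1, one_mem _, by simp [hX0], by simp [hX0]⟩

lemma conj_comp (g h Y : Matrix (Fin 2) (Fin 2) ℂ) :
    (h * g) * Y * (h * g)⁻¹ = h * (g * Y * g⁻¹) * h⁻¹ := by
  rw [Matrix.mul_inv_rev]
  simp only [mul_assoc]

lemma zerodiag_triangular (l : ℂ) (c : ℝ) (hc : 0 ≤ c) :
    ∃ u ∈ SU2, (u * !![l, (c : ℂ) * l; 0, -l] * u⁻¹) 0 0 = 0 ∧
      (u * !![l, (c : ℂ) * l; 0, -l] * u⁻¹) 1 1 = 0 := by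
  obtain ⟨a0, ha0pos, key⟩ : ∃ a0 : ℝ, 0 < a0 ∧ a0 ^ 2 + c * a0 = 1 := by
    refine ⟨(Real.sqrt (c ^ 2 + 4) - c) / 2, ?_, ?_⟩
    · have : c < Real.sqrt (c ^ 2 + 4) := by
        nlinarith [Real.sqrt_nonneg (c ^ 2 + 4), Real.sq_sqrt (show (0:ℝ) ≤ c ^ 2 + 4 by positivity)]
      linarith
    · nlinarith [Real.sq_sqrt (show (0:ℝ) ≤ c ^ 2 + 4 by positivity)]
  obtain ⟨n, hnpos, hn2⟩ : ∃ n : ℝ, 0 < n ∧ n ^ 2 = a0 ^ 2 + 1 :=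
    ⟨Real.sqrt (a0 ^ 2 + 1), Real.sqrt_pos.mpr (by positivity), Real.sq_sqrt (by positivity)⟩
  have hnne : (n : ℂ) ≠ 0 := Complex.ofReal_ne_zero.mpr hnpos.ne'
  have hunit : ((a0 / n : ℝ) : ℂ) * conj' ((a0 / n : ℝ) : ℂ) +
      ((1 / n : ℝ) : ℂ) * conj' ((1 / n : ℝ) : ℂ) = 1 := by
    rw [Complex.conj_ofReal, Complex.conj_ofReal]
    have h : (a0 / n) * (a0 / n) + (1 / n) * (1 / n) = 1 := by
      field_simp
      nlinarith [hn2]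
    exact_mod_cast congrArg (fun x : ℝ => (x : ℂ)) h
  refine ⟨mk2 ((a0 / n : ℝ) : ℂ) ((1 / n : ℝ) : ℂ), mk2_mem hunit, ?_⟩
  have hinv : (mk2 ((a0 / n : ℝ) : ℂ) ((1 / n : ℝ) : ℂ))⁻¹ =
      !![((a0 / n : ℝ) : ℂ), -((1 / n : ℝ) : ℂ); ((1 / n : ℝ) : ℂ), ((a0 / n : ℝ) : ℂ)] := by
    have := mk2_inv hunit
    simpa [Complex.conj_ofReal] using this
  rw [hinv]
  have keyC : (a0 : ℂ) ^ 2 + (c : ℂ) * (a0 : ℂ) = 1 := by exact_mod_cast key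
  have hn2C : (n : ℂ) ^ 2 = (a0 : ℂ) ^ 2 + 1 := by exact_mod_cast hn2
  constructor <;>
  · simp only [mk2, Matrix.mul_apply, Fin.sum_univ_two, Matrix.cons_val', Matrix.cons_val_zero,
      Matrix.cons_val_one, Matrix.head_cons, Matrix.head_fin_const, Matrix.empty_val',
      Matrix.cons_val_fin_one, Complex.conj_ofReal]
    push_cast
    norm_num [Matrix.of_apply, Matrix.cons_val_zero, Matrix.cons_val_one, Matrix.head_cons,
      Matrix.cons_val', Matrix.empty_val', Matrix.cons_val_fin_one, Matrix.head_fin_const]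
    first
      | linear_combination (l / (n:ℂ) ^ 2) * keyC
      | linear_combination (-l / (n:ℂ) ^ 2) * keyC

lemma zerodiag (Y : Matrix (Fin 2) (Fin 2) ℂ) (hY : Y.trace = 0) :
    ∃ g ∈ SU2, (g * Y * g⁻¹) 0 0 = 0 ∧ (g * Y * g⁻¹) 1 1 = 0 := by
  obtain ⟨g, hg, htr, h10⟩ := triangularize Y hY
  obtain ⟨A, hA⟩ : ∃ B, g * Y * g⁻¹ = B := ⟨_, rfl⟩
  rw [hA] at htr h10
  obtain ⟨l, hl⟩ : ∃ x, A 0 0 = x := ⟨_, rfl⟩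
  obtain ⟨μ, hμ⟩ : ∃ x, A 0 1 = x := ⟨_, rfl⟩
  have h11 : A 1 1 = -l := by
    rw [Matrix.trace_fin_two, hl] at htr; linear_combination htr
  have hAe : A = !![l, μ; 0, -l] := by
    rw [Matrix.eta_fin_two A, hl, hμ, h10, h11]
  by_cases hl0 : l = 0
  · refine ⟨g, hg, ?_, ?_⟩
    · rw [hA, hl, hl0]
    · rw [hA, h11, hl0, neg_zero]
  have hla : ‖l‖ ≠ 0 := norm_ne_zero_iff.mpr hl0
  obtain ⟨c, hcdef⟩ : ∃ x : ℝ, ‖μ‖ / ‖l‖ = x := ⟨_, rfl⟩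
  have hc0 : 0 ≤ c := by
    rw [← hcdef]; exact div_nonneg (norm_nonneg μ) (norm_nonneg l)
  -- find a phase e with e ^ 2 * μ = c * l
  obtain ⟨e, he, he2⟩ : ∃ e : ℂ, e * conj' e = 1 ∧ e ^ 2 * μ = (c : ℝ) * l := by
    by_cases hμ0 : μ = 0
    · refine ⟨1, by simp, ?_⟩
      have : c = 0 := by rw [← hcdef, hμ0]; simp
      rw [hμ0, this]; simp
    · have hμa : ‖μ‖ ≠ 0 := norm_ne_zero_iff.mpr hμ0
      obtain ⟨e, hee⟩ := IsAlgClosed.exists_pow_nat_eq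
        (k := ℂ) (((c : ℝ) : ℂ) * l / μ) (n := 2) (by norm_num)
      have hcabs : |c| = c := _root_.abs_of_nonneg hc0
      have habs : ‖e‖ = 1 := by
        have h1 : ‖e‖ ^ 2 = 1 := by
          rw [← norm_pow, hee, norm_div, norm_mul, Complex.norm_real, Real.norm_eq_abs, hcabs, ← hcdef]
          field_simp
        nlinarith [norm_nonneg e]
      refine ⟨e, ?_, ?_⟩
      · rw [Complex.mul_conj]
        norm_cast
        rw [Complex.normSq_eq_norm_sq, habs]; norm_num
      · rw [hee]
        field_simp
  obtain ⟨t, htdef⟩ : ∃ B, mk2 e 0 = B := ⟨_, rfl⟩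
  have htunit : e * conj' e + 0 * conj' 0 = 1 := by simpa using he
  have htmem : t ∈ SU2 := htdef ▸ mk2_mem htunit
  have htinv : t⁻¹ = !![conj' e, 0; 0, e] := by
    rw [← htdef]
    have := mk2_inv htunit
    simpa using this
  have htAt : t * A * t⁻¹ = !![l, (c : ℂ) * l; 0, -l] := by
    rw [htinv, hAe, ← htdef]
    ext i j
    fin_cases i <;> fin_cases j <;>
      simp [mk2, Matrix.mul_apply, Fin.sum_univ_two]
    all_goals
      first
        | linear_combination l * he
        | linear_combination (-l) * he
        | linear_combination he2
  obtain ⟨u, hu, hu1, hu2⟩ := zerodiag_triangular l c hc0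
  refine ⟨u * (t * g), mul_mem hu (mul_mem htmem hg), ?_, ?_⟩ <;>
    rw [conj_comp (t * g) u Y, conj_comp g t Y, hA, htAt]
  · exact hu1
  · exact hu2

lemma star_mem_SU2 {g : Matrix (Fin 2) (Fin 2) ℂ} (hg : g ∈ SU2) : star g ∈ SU2 := by
  rw [mem_SU2] at hg ⊢
  constructor
  · rw [star_star]
    exact mul_eq_one_comm.mp hg.1
  · have : (star g).det = starRingEnd ℂ g.det := by
      rw [Matrix.star_eq_conjTranspose, Matrix.det_conjTranspose]; rfl
    rw [this, hg.2]; simp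

lemma trace_conj {g : Matrix (Fin 2) (Fin 2) ℂ} (hg : g ∈ SU2) (X : Matrix (Fin 2) (Fin 2) ℂ) :
    (g * X * g⁻¹).trace = X.trace := by
  have h : g⁻¹ * g = 1 := Matrix.nonsing_inv_mul g (by rw [((mem_SU2 g).mp hg).2]; exact isUnit_one)
  rw [Matrix.trace_mul_cycle, h, one_mul]

lemma stab1_iff (g : Matrix (Fin 2) (Fin 2) ℂ) :
    (g ∈ SU2 ∧ ∀ X ∈ V1, g * X * g⁻¹ ∈ V1) ↔ g ∈ TDiag := by
  constructor
  · rintro ⟨hg, hstab⟩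
    obtain ⟨h11, h10⟩ := entries_of_SU2 hg
    have hE : (!![0, 1; 0, 0] : Matrix (Fin 2) (Fin 2) ℂ) ∈ V1 := by
      constructor <;> simp [Matrix.trace_fin_two]
    have h2 := (hstab _ hE).2
    rw [inv_of_SU2 hg] at h2
    simp [Matrix.mul_apply, Fin.sum_univ_two, Matrix.star_apply] at h2
    -- expected : g 1 0 * conj' (g 0 1) = 0
    have h01 : g 0 1 = 0 := by
      rcases h2 with h | h
      · rw [h] at h10
        simpa using h10.symm
      · exact h
    exact ⟨hg, h01, by rw [h10, h01]; simp⟩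
  · rintro ⟨hg, h01, h10⟩
    refine ⟨hg, fun X hX => ?_⟩
    obtain ⟨hXtr, hX10⟩ := hX
    refine ⟨by rw [trace_conj hg, hXtr], ?_⟩
    rw [inv_of_SU2 hg]
    simp [Matrix.mul_apply, Fin.sum_univ_two, Matrix.star_apply, h01, h10, hX10]

lemma diag_or_antidiag {g : Matrix (Fin 2) (Fin 2) ℂ} (hg : g ∈ SU2)
    (h : g 0 0 = 0 ∨ g 0 1 = 0) :
    (g 0 1 = 0 ∧ g 1 0 = 0) ∨ (g 0 0 = 0 ∧ g 1 1 = 0) := by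
  obtain ⟨h11, h10⟩ := entries_of_SU2 hg
  rcases h with h | h
  · exact Or.inr ⟨h, by rw [h11, h]; simp⟩
  · exact Or.inl ⟨h, by rw [h10, h]; simp⟩

lemma stab2_iff (g : Matrix (Fin 2) (Fin 2) ℂ) :
    (g ∈ SU2 ∧ ∀ Y ∈ V2, g * Y * g⁻¹ ∈ V2) ↔ g ∈ NTDiag := by
  have hsplit : ∀ {h : Matrix (Fin 2) (Fin 2) ℂ}, h ∈ SU2 →
      (h 0 1 = 0 ∧ h 1 0 = 0) ∨ (h 0 0 = 0 ∧ h 1 1 = 0) →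
      ∀ Y ∈ V2, h * Y * h⁻¹ ∈ V2 := by
    rintro h hh hcases Y ⟨hY0, hY1⟩
    rw [inv_of_SU2 hh]
    rcases hcases with ⟨ha, hb⟩ | ⟨ha, hb⟩ <;>
      constructor <;>
      simp [Matrix.mul_apply, Fin.sum_univ_two, Matrix.star_apply, ha, hb, hY0, hY1]
  constructor
  · rintro ⟨hg, hstab⟩
    obtain ⟨h11, h10⟩ := entries_of_SU2 hg
    have hE : (!![0, 1; 0, 0] : Matrix (Fin 2) (Fin 2) ℂ) ∈ V2 := by
      constructor <;> simp
    have h2 := (hstab _ hE).1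
    rw [inv_of_SU2 hg] at h2
    simp [Matrix.mul_apply, Fin.sum_univ_two, Matrix.star_apply] at h2
    -- expected : g 0 0 * conj' (g 0 1) = 0
    have hcases : g 0 0 = 0 ∨ g 0 1 = 0 := h2
    refine ⟨hg, fun t ht => ?_⟩
    obtain ⟨htmem, ht01, ht10⟩ := ht
    have hginv : g⁻¹ ∈ SU2 := by rw [inv_of_SU2 hg]; exact star_mem_SU2 hg
    refine ⟨mul_mem (mul_mem hg htmem) hginv, ?_, ?_⟩ <;>
      rw [inv_of_SU2 hg] <;>
      rcases diag_or_antidiag hg hcases with ⟨ha, hb⟩ | ⟨ha, hb⟩ <;>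
      simp [Matrix.mul_apply, Fin.sum_univ_two, Matrix.star_apply, ha, hb, ht01, ht10]
  · rintro ⟨hg, hnorm⟩
    obtain ⟨h11, h10⟩ := entries_of_SU2 hg
    have ht0 : (!![Complex.I, 0; 0, -Complex.I] : Matrix (Fin 2) (Fin 2) ℂ) ∈ TDiag := by
      refine ⟨(mem_SU2 _).mpr ⟨?_, ?_⟩, by simp, by simp⟩
      · ext i j
        fin_cases i <;> fin_cases j <;>
          simp [Matrix.mul_apply, Fin.sum_univ_two, Matrix.star_apply, Matrix.one_apply]
      · simp [Matrix.det_fin_two]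
    have h2 := (hnorm _ ht0).2.1
    rw [inv_of_SU2 hg] at h2
    simp [Matrix.mul_apply, Fin.sum_univ_two, Matrix.star_apply] at h2
    -- derive g 0 0 * g 0 1 = 0
    have hc10 : conj' (g 1 0) = -(g 0 1) := by rw [h10]; simp
    have hc11 : conj' (g 1 1) = g 0 0 := by rw [h11]; simp
    rw [hc10, hc11] at h2
    have hz : (-2 * Complex.I) * (g 0 0 * g 0 1) = 0 := by
      linear_combination h2
    have hcases : g 0 0 = 0 ∨ g 0 1 = 0 := by
      rcases mul_eq_zero.mp hz with h | h
      · exact absurd h (by simp [Complex.I_ne_zero])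
      · exact mul_eq_zero.mp h
    exact ⟨hg, hsplit hg (diag_or_antidiag hg hcases)⟩

/-- For `G = SU(2) × SU(2)` acting on `𝔰𝔩(2,ℂ) ⊕ 𝔰𝔩(2,ℂ)` by componentwise
conjugation, the subspace `V = V₁ ⊕ V₂` (upper-triangular traceless matrices in the first
factor, zero-diagonal matrices in the second) is universal, and its stabilizer
`G_V = {g ∈ G : Ad_g(V) ⊆ V}` equals `T × N(T)`. -/
theorem product_universal_and_stabilizer :
    (∀ X Y : Matrix (Fin 2) (Fin 2) ℂ, X.trace = 0 → Y.trace = 0 →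
      ∃ g₁ ∈ Matrix.specialUnitaryGroup (Fin 2) ℂ,
        ∃ g₂ ∈ Matrix.specialUnitaryGroup (Fin 2) ℂ,
          g₁ * X * g₁⁻¹ ∈ V1 ∧ g₂ * Y * g₂⁻¹ ∈ V2) ∧
    {p : Matrix (Fin 2) (Fin 2) ℂ × Matrix (Fin 2) (Fin 2) ℂ |
        (p.1 ∈ Matrix.specialUnitaryGroup (Fin 2) ℂ ∧
          p.2 ∈ Matrix.specialUnitaryGroup (Fin 2) ℂ) ∧
        (∀ X ∈ V1, p.1 * X * p.1⁻¹ ∈ V1) ∧ (∀ Y ∈ V2, p.2 * Y * p.2⁻¹ ∈ V2)}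
      = {p | p.1 ∈ TDiag ∧ p.2 ∈ NTDiag} := by
  constructor
  · intro X Y hX hY
    obtain ⟨g₁, hg₁, h1, h2⟩ := triangularize X hX
    obtain ⟨g₂, hg₂, h3, h4⟩ := zerodiag Y hY
    exact ⟨g₁, hg₁, g₂, hg₂, ⟨h1, h2⟩, ⟨h3, h4⟩⟩
  · ext p
    simp only [Set.mem_setOf_eq]
    constructor
    · rintro ⟨⟨h1, h2⟩, h3, h4⟩
      exact ⟨(stab1_iff p.1).mp ⟨h1, h3⟩, (stab2_iff p.2).mp ⟨h2, h4⟩⟩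
    · rintro ⟨h1, h2⟩
      obtain ⟨ha, hb⟩ := (stab1_iff p.1).mpr h1
      obtain ⟨hc, hd⟩ := (stab2_iff p.2).mpr h2
      exact ⟨⟨ha, hc⟩, hb, hd⟩
end
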